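/- The shortest admissible loop of length greater than 4 has length 8, and any admissible loop of length 8 is, up to isometry of the lattice, the 3×3 square with its center removed. -/

import Mathlib

open scoped Classical

/-- Two cells of `ℤ²` are adjacent iff they differ by a unit vector. -/
def Adj (p q : ℤ × ℤ) : Prop :=
  (p.1 - q.1).natAbs + (p.2 - q.2).natAbs = 1

/-- A finite set of cells is connected under edge-adjacency. -/
def ConnectedIn (S : Finset (ℤ × ℤ)) : Prop :=
  ∀ p ∈ S, ∀ q ∈ S,
    Relation.ReflTransGen (fun a b => a ∈ S ∧ b ∈ S ∧ Adj a b) p q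

/-- A polyomino: a finite nonempty edge-connected subset of `ℤ²`. -/
def IsPolyomino (S : Finset (ℤ × ℤ)) : Prop :=
  S.Nonempty ∧ ConnectedIn S

/-- Admissible: no four cells equally spaced on a straight line. -/
def Admissible (S : Finset (ℤ × ℤ)) : Prop :=
  ¬ ∃ (p v : ℤ × ℤ), v ≠ 0 ∧ p ∈ S ∧ p + v ∈ S ∧
      p + (2 : ℤ) • v ∈ S ∧ p + (3 : ℤ) • v ∈ S

/-- Degree of a cell in the adjacency graph restricted to `S`. -/
noncomputable def degIn (S : Finset (ℤ × ℤ)) (p : ℤ × ℤ) : ℕ :=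
  (S.filter fun q => Adj p q).card

/-- A path polyomino: either a single cell, or a connected set where every cell
has degree at most 2 and exactly two cells have degree 1. -/
def IsPathPoly (S : Finset (ℤ × ℤ)) : Prop :=
  IsPolyomino S ∧
    (S.card = 1 ∨
      ((∀ p ∈ S, degIn S p ≤ 2) ∧ (S.filter fun p => degIn S p = 1).card = 2))

/-- A loop: a polyomino all of whose cells have degree exactly 2. -/
def IsLoop (S : Finset (ℤ × ℤ)) : Prop :=
  IsPolyomino S ∧ ∀ p ∈ S, degIn S p = 2

/-- Graph distance within `S` (shortest walk staying in `S`). -/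
noncomputable def distIn (S : Finset (ℤ × ℤ)) (p q : ℤ × ℤ) : ℕ :=
  sInf {n | ∃ f : ℕ → ℤ × ℤ, f 0 = p ∧ f n = q ∧ (∀ i ≤ n, f i ∈ S) ∧
    ∀ i < n, Adj (f i) (f (i + 1))}

/-- Graph diameter of `S`. -/
noncomputable def diamIn (S : Finset (ℤ × ℤ)) : ℕ :=
  sSup {d | ∃ p ∈ S, ∃ q ∈ S, distIn S p q = d}

/-- Isometries of the square lattice: bijections of `ℤ²` preserving squared
Euclidean distance (compositions of translations, 90° rotations, reflections). -/
def IsLatticeIso (f : ℤ × ℤ → ℤ × ℤ) : Prop :=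
  Function.Bijective f ∧ ∀ p q : ℤ × ℤ,
    ((f p).1 - (f q).1) ^ 2 + ((f p).2 - (f q).2) ^ 2 =
      (p.1 - q.1) ^ 2 + (p.2 - q.2) ^ 2

/-- Two finite cell sets are equivalent up to a lattice isometry. -/
def IsoEquiv (S T : Finset (ℤ × ℤ)) : Prop :=
  ∃ f, IsLatticeIso f ∧ S.image f = T


/-!
A loop with at most 8 cells either fits in a 2 × 2 box, and then has at most 4 cells, or, after
exchanging the coordinates, meets at least three rows. A cell of an extremal row has no neighbour
beyond that row, so having degree 2 it continues inside the row: the row is a run of at least two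
cells whose two end cells turn inward, putting two cells into the adjacent inner row. A run of
exactly two cells closes up with these into a 2 × 2 square, and a loop containing a 2 × 2 square
is that square. Otherwise the top and bottom rows have at least three cells and their inner
neighbours at least two, so the bound 8 leaves exactly three rows with 3, 2, 3 cells, aligned
as in a translate of the hollow square.
-/

open Finset

instance : DecidableRel Adj := fun _ _ => inferInstanceAs (Decidable (_ = 1))

lemma degIn_eq_card_filter (S : Finset (ℤ × ℤ)) (p : ℤ × ℤ) :
    degIn S p = #(S.filter (Adj p)) := by
  unfold degIn
  congr

lemma adj_comm {p q : ℤ × ℤ} : Adj p q ↔ Adj q p := by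
  unfold Adj
  omega

lemma adj_iff_sq {p q : ℤ × ℤ} : Adj p q ↔ (p.1 - q.1) ^ 2 + (p.2 - q.2) ^ 2 = 1 := by
  rw [Adj, ← Int.natAbs_sq (p.1 - q.1), ← Int.natAbs_sq (p.2 - q.2)]
  generalize (p.1 - q.1).natAbs = a
  generalize (p.2 - q.2).natAbs = b
  norm_cast
  constructor <;> intro h
  · obtain ⟨ha, hb⟩ : a ≤ 1 ∧ b ≤ 1 := by omega
    interval_cases a <;> interval_cases b <;> simp_all
  · nlinarith [Nat.le_self_pow two_ne_zero a, Nat.le_self_pow two_ne_zero b]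

lemma two_le_degIn {T : Finset (ℤ × ℤ)} {p q r : ℤ × ℤ} (hq : q ∈ T) (hr : r ∈ T) (hqr : q ≠ r)
    (hpq : Adj p q) (hpr : Adj p r) : 2 ≤ degIn T p := by
  rw [degIn_eq_card_filter, ← card_pair hqr]
  exact card_le_card (by simp [insert_subset_iff, *])

namespace IsLatticeIso

variable {f g : ℤ × ℤ → ℤ × ℤ}

lemma adj_iff (hf : IsLatticeIso f) {p q : ℤ × ℤ} : Adj (f p) (f q) ↔ Adj p q := by
  rw [adj_iff_sq, adj_iff_sq, hf.2]

lemma degIn_image (hf : IsLatticeIso f) (S : Finset (ℤ × ℤ)) (p : ℤ × ℤ) :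
    degIn (S.image f) (f p) = degIn S p := by
  rw [degIn_eq_card_filter, degIn_eq_card_filter, filter_image,
    card_image_of_injective _ hf.1.1]
  simp only [hf.adj_iff]

lemma comp (hf : IsLatticeIso f) (hg : IsLatticeIso g) : IsLatticeIso (g ∘ f) :=
  ⟨hg.1.comp hf.1, fun p q => by simp only [Function.comp_apply, hg.2, hf.2]⟩

end IsLatticeIso

lemma isLatticeIso_add_right (v : ℤ × ℤ) : IsLatticeIso (· + v) :=
  ⟨(Equiv.addRight v).bijective, fun p q => by simp⟩

lemma isLatticeIso_swap : IsLatticeIso Prod.swap :=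
  ⟨Prod.swap_bijective, fun p q => by simp [add_comm]⟩

lemma IsLoop.image {S : Finset (ℤ × ℤ)} {f : ℤ × ℤ → ℤ × ℤ} (hS : IsLoop S)
    (hf : IsLatticeIso f) : IsLoop (S.image f) := by
  refine ⟨⟨hS.1.1.image f, ?_⟩, ?_⟩
  · simp only [ConnectedIn, forall_mem_image]
    intro p hp q hq
    exact (hS.1.2 p hp q hq).lift f fun a b h =>
      ⟨mem_image_of_mem f h.1, mem_image_of_mem f h.2.1, hf.adj_iff.2 h.2.2⟩
  · simp only [forall_mem_image, hf.degIn_image]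
    exact hS.2

lemma IsoEquiv.card_eq {S T : Finset (ℤ × ℤ)} (h : IsoEquiv S T) : #S = #T := by
  obtain ⟨f, hf, rfl⟩ := h
  exact (card_image_of_injective _ hf.1.1).symm

lemma IsoEquiv.of_image {S T : Finset (ℤ × ℤ)} {g : ℤ × ℤ → ℤ × ℤ} (hg : IsLatticeIso g)
    (h : IsoEquiv (S.image g) T) : IsoEquiv S T := by
  obtain ⟨f, hf, rfl⟩ := h
  exact ⟨f ∘ g, hg.comp hf, (image_image).symm⟩

lemma connectedIn_of_walk {T : Finset (ℤ × ℤ)} (f : ℕ → ℤ × ℤ) (n : ℕ)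
    (hmem : ∀ i ≤ n, f i ∈ T) (hadj : ∀ i < n, Adj (f i) (f (i + 1)))
    (hcover : ∀ p ∈ T, ∃ i ≤ n, f i = p) : ConnectedIn T := by
  have hstep : ∀ i < n, f i ∈ T ∧ f (i + 1) ∈ T ∧ Adj (f i) (f (i + 1)) := fun i hi =>
    ⟨hmem i hi.le, hmem (i + 1) hi, hadj i hi⟩
  have hto : ∀ i ≤ n, Relation.ReflTransGen (fun a b => a ∈ T ∧ b ∈ T ∧ Adj a b) (f 0) (f i) := by
    intro i hi
    induction i with
    | zero => exact .refl
    | succ i ih => exact (ih (by omega)).tail (hstep i hi)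
  have hfrom : ∀ i ≤ n, Relation.ReflTransGen (fun a b => a ∈ T ∧ b ∈ T ∧ Adj a b) (f i) (f 0) := by
    intro i hi
    induction i with
    | zero => exact .refl
    | succ i ih =>
      obtain ⟨h₁, h₂, h₃⟩ := hstep i hi
      exact (ih (by omega)).head ⟨h₂, h₁, adj_comm.1 h₃⟩
  intro p hp q hq
  obtain ⟨i, hi, rfl⟩ := hcover p hp
  obtain ⟨j, hj, rfl⟩ := hcover q hq
  exact (hfrom i hi).trans (hto j hj)

section Loop

variable {S T : Finset (ℤ × ℤ)}

lemma IsLoop.eq_of_subset (hS : IsLoop S) (hT : T.Nonempty) (hTS : T ⊆ S)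
    (hdeg : ∀ p ∈ T, 2 ≤ degIn T p) : T = S := by
  have hclosed : ∀ p ∈ T, ∀ q ∈ S, Adj p q → q ∈ T := by
    intro p hp q hq hpq
    have hfilter : T.filter (Adj p) = S.filter (Adj p) := by
      refine eq_of_subset_of_card_le (filter_subset_filter _ hTS) ?_
      rw [← degIn_eq_card_filter, ← degIn_eq_card_filter, hS.2 p (hTS hp)]
      exact hdeg p hp
    have : q ∈ T.filter (Adj p) := hfilter ▸ mem_filter.2 ⟨hq, hpq⟩
    exact (mem_filter.1 this).1
  obtain ⟨t, ht⟩ := hT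
  refine Subset.antisymm hTS fun q hq => ?_
  have hpath := hS.1.2 t (hTS ht) q hq
  clear hq
  induction hpath with
  | refl => exact ht
  | tail _ hstep ih => exact hclosed _ ih _ hstep.2.1 hstep.2.2

lemma IsLoop.eq_of_square_subset (hS : IsLoop S) {a a' b b' : ℤ} (ha : (a - a').natAbs = 1)
    (hb : (b - b').natAbs = 1) (hsub : ({a, a'} : Finset ℤ) ×ˢ ({b, b'} : Finset ℤ) ⊆ S) :
    S = ({a, a'} : Finset ℤ) ×ˢ ({b, b'} : Finset ℤ) := by
  refine (hS.eq_of_subset ⟨(a, b), by simp⟩ hsub fun p hp => ?_).symm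
  simp only [mem_product, mem_insert, mem_singleton] at hp
  refine two_le_degIn (q := (a + a' - p.1, p.2)) (r := (p.1, b + b' - p.2)) ?_ ?_ ?_ ?_ ?_ <;>
    simp only [Adj, mem_product, mem_insert, mem_singleton, ne_eq, Prod.mk.injEq] <;> omega

lemma IsLoop.mem_of_not_mem (hS : IsLoop S) {e d x y : ℤ} (he : e = 1 ∨ e = -1)
    (hd : d = 1 ∨ d = -1) (hp : (x, y) ∈ S) (hx : (x - e, y) ∉ S) (hy : (x, y + d) ∉ S) :
    (x + e, y) ∈ S ∧ (x, y - d) ∈ S := by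
  have hsub : S.filter (Adj (x, y)) ⊆ {(x + e, y), (x, y - d)} := by
    rintro ⟨u, v⟩ huv
    rw [mem_filter] at huv
    have : (u, v) ≠ (x - e, y) := fun h => hx (h ▸ huv.1)
    have : (u, v) ≠ (x, y + d) := fun h => hy (h ▸ huv.1)
    have := huv.2
    simp only [Adj, mem_insert, mem_singleton, ne_eq, Prod.mk.injEq] at *
    omega
  have hne : ((x + e, y) : ℤ × ℤ) ≠ (x, y - d) := by simp only [ne_eq, Prod.mk.injEq]; omega
  have heq := eq_of_subset_of_card_le hsub
    (by rw [card_pair hne, ← degIn_eq_card_filter, hS.2 _ hp])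
  have h₁ : (x + e, y) ∈ S.filter (Adj (x, y)) := heq ▸ by simp
  have h₂ : (x, y - d) ∈ S.filter (Adj (x, y)) := heq ▸ by simp
  exact ⟨(mem_filter.1 h₁).1, (mem_filter.1 h₂).1⟩

end Loop

def row (S : Finset (ℤ × ℤ)) (y : ℤ) : Finset ℤ :=
  (S.filter (·.2 = y)).image Prod.fst

section Row

variable {S : Finset (ℤ × ℤ)}

@[simp]
lemma mem_row {x y : ℤ} : x ∈ row S y ↔ (x, y) ∈ S := by
  simp [row]

lemma sum_card_row (K : Finset ℤ) : ∑ y ∈ K, #(row S y) = #(S.filter (·.2 ∈ K)) := by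
  rw [← sum_card_fiberwise_eq_card_filter]
  refine sum_congr rfl fun y _ => card_image_of_injOn ?_
  rintro ⟨a, b⟩ hab ⟨c, d⟩ hcd (h : a = c)
  simp only [mem_coe, mem_filter] at hab hcd
  simp [h, hab.2, hcd.2]

lemma sum_card_row_le (K : Finset ℤ) : ∑ y ∈ K, #(row S y) ≤ #S :=
  sum_card_row K ▸ card_filter_le _ _

lemma sum_card_row_eq {K : Finset ℤ} (hK : ∀ p ∈ S, p.2 ∈ K) : ∑ y ∈ K, #(row S y) = #S := by
  rw [sum_card_row, filter_true_of_mem hK]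

end Row

section ExtremalRow

variable {S : Finset (ℤ × ℤ)} {d Y : ℤ}

-- Row `Y` is extremal on the side `d = ±1`: row `Y + d` is empty and `Y - d` is the row inside.

lemma IsLoop.exists_row_ends (hS : IsLoop S) (hd : d = 1 ∨ d = -1) (hout : ∀ x, (x, Y + d) ∉ S)
    (hne : (row S Y).Nonempty) :
    ∃ m M, m < M ∧ row S Y ⊆ Icc m M ∧ {m, m + 1, M - 1, M} ⊆ row S Y ∧
      {m, M} ⊆ row S (Y - d) := by
  set m := (row S Y).min' hne
  set M := (row S Y).max' hne
  have hm := mem_row.1 ((row S Y).min'_mem hne)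
  have hM := mem_row.1 ((row S Y).max'_mem hne)
  have hm' : (m - 1, Y) ∉ S := fun h => by
    have := (row S Y).min'_le _ (mem_row.2 h)
    omega
  have hM' : (M - -1, Y) ∉ S := fun h => by
    have := (row S Y).le_max' _ (mem_row.2 h)
    omega
  obtain ⟨hm₁, hm₂⟩ := hS.mem_of_not_mem (Or.inl rfl) hd hm hm' (hout m)
  obtain ⟨hM₁, hM₂⟩ := hS.mem_of_not_mem (Or.inr rfl) hd hM hM' (hout M)
  rw [← sub_eq_add_neg] at hM₁
  have hlt : m < M := by
    have := (row S Y).le_max' _ (mem_row.2 hm₁)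
    omega
  refine ⟨m, M, hlt, fun x hx => mem_Icc.2 ⟨min'_le _ _ hx, le_max' _ _ hx⟩, ?_, ?_⟩ <;>
    simp only [insert_subset_iff, singleton_subset_iff, mem_row]
  exacts [⟨hm, hm₁, hM₁, hM⟩, ⟨hm₂, hM₂⟩]

lemma IsLoop.two_le_card_inner_row (hS : IsLoop S) (hd : d = 1 ∨ d = -1)
    (hout : ∀ x, (x, Y + d) ∉ S) (hne : (row S Y).Nonempty) : 2 ≤ #(row S (Y - d)) := by
  obtain ⟨m, M, hmM, -, -, hinner⟩ := hS.exists_row_ends hd hout hne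
  exact card_pair hmM.ne ▸ card_le_card hinner

lemma IsLoop.card_eq_four_of_card_row_le_two (hS : IsLoop S) (hd : d = 1 ∨ d = -1)
    (hout : ∀ x, (x, Y + d) ∉ S) (hne : (row S Y).Nonempty) (h2 : #(row S Y) ≤ 2) :
    #S = 4 := by
  obtain ⟨m, M, hmM, -, hrow, hinner⟩ := hS.exists_row_ends hd hout hne
  obtain rfl : M = m + 1 := by
    by_contra hM
    have h3 : ({m, m + 1, M} : Finset ℤ) ⊆ row S Y :=
      subset_trans (by simp [insert_subset_iff]) hrow
    have := card_le_card h3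
    rw [card_eq_three.2 ⟨m, m + 1, M, by omega, by omega, by omega, rfl⟩] at this
    omega
  have hsq : ({m, m + 1} : Finset ℤ) ×ˢ ({Y, Y - d} : Finset ℤ) ⊆ S := by
    simp only [insert_subset_iff, singleton_subset_iff, mem_row] at hrow hinner
    rintro ⟨x, y⟩ h
    simp only [mem_product, mem_insert, mem_singleton] at h
    rcases h with ⟨rfl | rfl, rfl | rfl⟩
    exacts [hrow.1, hinner.1, hrow.2.1, hinner.2]
  rw [hS.eq_of_square_subset (by simp) (by omega) hsq, card_product,
    card_pair (by omega), card_pair (by omega)]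

lemma IsLoop.row_eq_Icc_of_card_row_eq_three (hS : IsLoop S) (hd : d = 1 ∨ d = -1)
    (hout : ∀ x, (x, Y + d) ∉ S) (hne : (row S Y).Nonempty) (h3 : #(row S Y) = 3) :
    ∃ a, row S Y = Icc a (a + 2) ∧ {a, a + 2} ⊆ row S (Y - d) := by
  obtain ⟨m, M, hmM, hIcc, hrow, hinner⟩ := hS.exists_row_ends hd hout hne
  have hle : M ≤ m + 2 := by
    by_contra hM
    have := card_le_card hrow
    rw [card_insert_of_notMem (by simp; omega), card_insert_of_notMem (by simp; omega),
      card_pair (by omega)] at this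
    omega
  have hge : m + 2 ≤ M := by
    have := card_le_card hIcc
    rw [Int.card_Icc] at this
    omega
  obtain rfl : M = m + 2 := by omega
  exact ⟨m, eq_of_subset_of_card_le hIcc (by rw [Int.card_Icc]; omega), hinner⟩

end ExtremalRow

def hollowSquare : Finset (ℤ × ℤ) :=
  {(0, 0), (1, 0), (2, 0), (2, 1), (2, 2), (1, 2), (0, 2), (0, 1)}

lemma mem_hollowSquare {x y : ℤ} :
    (x, y) ∈ hollowSquare ↔ 0 ≤ x ∧ x ≤ 2 ∧ 0 ≤ y ∧ y ≤ 2 ∧ (x, y) ≠ (1, 1) := by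
  simp only [hollowSquare, mem_insert, mem_singleton, Prod.mk.injEq, ne_eq]
  omega

lemma card_hollowSquare : #hollowSquare = 8 := by decide

lemma isLoop_hollowSquare : IsLoop hollowSquare := by
  refine ⟨⟨⟨(0, 0), by decide⟩, ?_⟩, fun p hp => ?_⟩
  · let walk : List (ℤ × ℤ) := [(0, 0), (1, 0), (2, 0), (2, 1), (2, 2), (1, 2), (0, 2), (0, 1)]
    exact connectedIn_of_walk (walk.getD · 0) 7 (by decide) (by decide) (by decide)
  · rw [degIn_eq_card_filter]
    fin_cases hp <;> decide

lemma admissible_hollowSquare : Admissible hollowSquare := by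
  rintro ⟨⟨x, y⟩, ⟨u, v⟩, hv, h₀, -, -, h₃⟩
  simp only [Prod.smul_mk, Prod.mk_add_mk, smul_eq_mul, mem_hollowSquare] at h₀ h₃
  simp only [ne_eq, Prod.mk_eq_zero] at hv
  omega

lemma card_le_two_of_forall_lt_add_two {T : Finset ℤ} (hT : ∀ a ∈ T, ∀ b ∈ T, b < a + 2) :
    #T ≤ 2 := by
  rcases T.eq_empty_or_nonempty with rfl | hne
  · simp
  have hsub : T ⊆ Icc (T.min' hne) (T.min' hne + 1) := fun b hb =>
    mem_Icc.2 ⟨min'_le _ _ hb, by have := hT _ (min'_mem _ hne) b hb; omega⟩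
  have := card_le_card hsub
  rwa [Int.card_Icc, show T.min' hne + 1 + 1 - T.min' hne = 2 by ring] at this

lemma card_le_four_of_forall_lt_add_two {S : Finset (ℤ × ℤ)}
    (hx : ∀ p ∈ S, ∀ q ∈ S, q.1 < p.1 + 2) (hy : ∀ p ∈ S, ∀ q ∈ S, q.2 < p.2 + 2) : #S ≤ 4 := by
  have h₁ : #(S.image Prod.fst) ≤ 2 :=
    card_le_two_of_forall_lt_add_two (by simpa only [forall_mem_image] using hx)
  have h₂ : #(S.image Prod.snd) ≤ 2 :=
    card_le_two_of_forall_lt_add_two (by simpa only [forall_mem_image] using hy)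
  calc #S ≤ #(S.image Prod.fst ×ˢ S.image Prod.snd) := card_le_card subset_product
    _ = #(S.image Prod.fst) * #(S.image Prod.snd) := card_product _ _
    _ ≤ 2 * 2 := Nat.mul_le_mul h₁ h₂

section Classification

variable {S : Finset (ℤ × ℤ)}

lemma IsLoop.isoEquiv_hollowSquare_of_three_rows (hS : IsLoop S) {y : ℤ}
    (hrows : ∀ p ∈ S, y ≤ p.2 ∧ p.2 ≤ y + 2) (hcard : #S ≤ 8)
    (hbot : 3 ≤ #(row S y)) (htop : 3 ≤ #(row S (y + 2))) : IsoEquiv S hollowSquare := by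
  have hout₀ : ∀ x, (x, y + -1) ∉ S := fun x h => by have := hrows _ h; omega
  have hout₂ : ∀ x, (x, y + 2 + 1) ∉ S := fun x h => by have := hrows _ h; omega
  have hmid := hS.two_le_card_inner_row (Or.inr rfl) hout₀ (card_pos.1 (by omega))
  rw [sub_neg_eq_add] at hmid
  have hsum := sum_card_row_eq (K := {y, y + 1, y + 2}) fun p hp => by
    have := hrows p hp
    simp only [mem_insert, mem_singleton]
    omega
  rw [sum_insert (by simp), sum_pair (by simp)] at hsum
  obtain ⟨a, htopEq, htopIn⟩ := hS.row_eq_Icc_of_card_row_eq_three (Or.inl rfl) hout₂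
    (card_pos.1 (by omega)) (by omega)
  obtain ⟨c, hbotEq, hbotIn⟩ := hS.row_eq_Icc_of_card_row_eq_three (Or.inr rfl) hout₀
    (card_pos.1 (by omega)) (by omega)
  rw [show y + 2 - 1 = y + 1 by ring] at htopIn
  rw [sub_neg_eq_add] at hbotIn
  have hmidEq : row S (y + 1) = {a, a + 2} :=
    (eq_of_subset_of_card_le htopIn (by rw [card_pair (by omega)]; omega)).symm
  obtain rfl : c = a := by
    simp only [hmidEq, insert_subset_iff, singleton_subset_iff, mem_insert, mem_singleton] at hbotIn
    omega
  refine ⟨(· + -(c, y)), isLatticeIso_add_right _, eq_of_subset_of_card_le ?_ ?_⟩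
  · rintro _ hp
    obtain ⟨⟨x, z⟩, hxz, rfl⟩ := mem_image.1 hp
    have hz := hrows _ hxz
    have hx := mem_row.2 hxz
    simp only [Prod.neg_mk, Prod.mk_add_mk, mem_hollowSquare]
    obtain rfl | rfl | rfl : z = y ∨ z = y + 1 ∨ z = y + 2 := by omega
    all_goals
      first
      | rw [hbotEq] at hx | rw [hmidEq] at hx | rw [htopEq] at hx
      simp only [mem_Icc, mem_insert, mem_singleton] at hx
      simp only [ne_eq, Prod.mk.injEq]
      omega
  · rw [card_hollowSquare, card_image_of_injective _ (isLatticeIso_add_right _).1.1]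
    omega

lemma IsLoop.card_le_four_or_isoEquiv_of_tall (hS : IsLoop S) (hcard : #S ≤ 8)
    (htall : ∃ p ∈ S, ∃ q ∈ S, p.2 + 2 ≤ q.2) : #S ≤ 4 ∨ IsoEquiv S hollowSquare := by
  obtain ⟨p, hp, q, hq, hpq⟩ := htall
  obtain ⟨⟨x₀, y₀⟩, hp₀, hy₀⟩ := S.exists_min_image Prod.snd ⟨p, hp⟩
  obtain ⟨⟨x₁, y₁⟩, hp₁, hy₁⟩ := S.exists_max_image Prod.snd ⟨p, hp⟩
  dsimp only at hy₀ hy₁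
  have hout₀ : ∀ x, (x, y₀ + -1) ∉ S := fun x h => by have := hy₀ _ h; omega
  have hout₁ : ∀ x, (x, y₁ + 1) ∉ S := fun x h => by have := hy₁ _ h; omega
  have hne₀ : (row S y₀).Nonempty := ⟨x₀, mem_row.2 hp₀⟩
  have hne₁ : (row S y₁).Nonempty := ⟨x₁, mem_row.2 hp₁⟩
  by_cases hsmall : #(row S y₀) ≤ 2 ∨ #(row S y₁) ≤ 2
  · left
    rcases hsmall with h | h
    · exact (hS.card_eq_four_of_card_row_le_two (Or.inr rfl) hout₀ hne₀ h).le
    · exact (hS.card_eq_four_of_card_row_le_two (Or.inl rfl) hout₁ hne₁ h).le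
  simp only [not_or, not_le] at hsmall
  have hpq₀ := hy₀ p hp
  have hpq₁ := hy₁ q hq
  obtain rfl : y₁ = y₀ + 2 := by
    have hin₀ := hS.two_le_card_inner_row (Or.inr rfl) hout₀ hne₀
    have hin₁ := hS.two_le_card_inner_row (Or.inl rfl) hout₁ hne₁
    by_contra hne
    have := sum_card_row_le (S := S) {y₀, y₀ - -1, y₁ - 1, y₁}
    rw [sum_insert (by simp; omega), sum_insert (by simp; omega), sum_pair (by omega)] at this
    omega
  exact .inr (hS.isoEquiv_hollowSquare_of_three_rows (fun r hr => ⟨hy₀ r hr, hy₁ r hr⟩) hcard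
    hsmall.1 hsmall.2)

theorem IsLoop.card_le_four_or_isoEquiv (hS : IsLoop S) (hcard : #S ≤ 8) :
    #S ≤ 4 ∨ IsoEquiv S hollowSquare := by
  by_cases htall : ∃ p ∈ S, ∃ q ∈ S, p.2 + 2 ≤ q.2
  · exact hS.card_le_four_or_isoEquiv_of_tall hcard htall
  by_cases hwide : ∃ p ∈ S, ∃ q ∈ S, p.1 + 2 ≤ q.1
  · have hswap := card_image_of_injective S Prod.swap_injective
    obtain ⟨p, hp, q, hq, hpq⟩ := hwide
    rcases (hS.image isLatticeIso_swap).card_le_four_or_isoEquiv_of_tall (hswap ▸ hcard)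
      ⟨p.swap, mem_image_of_mem _ hp, q.swap, mem_image_of_mem _ hq, hpq⟩ with h | h
    · exact .inl (hswap ▸ h)
    · exact .inr (h.of_image isLatticeIso_swap)
  push Not at htall hwide
  exact .inl (card_le_four_of_forall_lt_add_two hwide htall)

end Classification

theorem shortest_nontrivial_admissible_loop :
    (∀ S : Finset (ℤ × ℤ), IsLoop S → Admissible S → 4 < S.card → 8 ≤ S.card) ∧
    (∃ S : Finset (ℤ × ℤ), IsLoop S ∧ Admissible S ∧ S.card = 8) ∧
    (∀ S : Finset (ℤ × ℤ), IsLoop S → Admissible S → S.card = 8 →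
      IsoEquiv S ({((0:ℤ),(0:ℤ)), (1,0), (2,0), (2,1), (2,2), (1,2), (0,2), (0,1)} : Finset (ℤ × ℤ))) := by
  refine ⟨fun S hS _ h4 => ?_, ⟨hollowSquare, isLoop_hollowSquare, admissible_hollowSquare,
    card_hollowSquare⟩, fun S hS _ h8 => ?_⟩
  · by_contra h8
    rcases hS.card_le_four_or_isoEquiv (by omega) with h | h
    · omega
    · rw [h.card_eq, card_hollowSquare] at h8
      omega
  · exact (hS.card_le_four_or_isoEquiv h8.le).resolve_left (by omega)
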